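/- arXiv:2108.00880 — 5 statements merged into one kernel-verified Lean document; each statement's English description precedes it below -/
import Mathlib

section
/- If n is even, then there exists no nondegenerate n-dimensional simplex S all of whose vertices are vertices of the unit cube Q_n and which satisfies S ⊆ Q_n ⊆ nS. -/
open Set MeasureTheory Finset Metric

noncomputable section

/-- The unit cube `Q_n = [0,1]^n` in `ℝ^n`. -/
def unitCube (n : ℕ) : Set (EuclideanSpace ℝ (Fin n)) :=
  {x | ∀ i, x i ∈ Set.Icc (0 : ℝ) 1}

/-- The set of vertices of the unit cube `Q_n`. -/
def cubeVertices (n : ℕ) : Set (EuclideanSpace ℝ (Fin n)) :=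
  {x | ∀ i, x i = 0 ∨ x i = 1}

/-- The closed unit Euclidean ball `B_n` in `ℝ^n`. -/
def unitBall (n : ℕ) : Set (EuclideanSpace ℝ (Fin n)) :=
  Metric.closedBall 0 1

/-- Image of a set under the homothety with center `c` and ratio `σ`. -/
def homothet {n : ℕ} (c : EuclideanSpace ℝ (Fin n)) (σ : ℝ)
    (S : Set (EuclideanSpace ℝ (Fin n))) : Set (EuclideanSpace ℝ (Fin n)) :=
  (fun x => c + σ • (x - c)) '' S

/-- The simplex with vertex set `v` (its convex hull). -/
def simplexSet {n : ℕ} (v : Fin (n + 1) → EuclideanSpace ℝ (Fin n)) :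
    Set (EuclideanSpace ℝ (Fin n)) :=
  convexHull ℝ (Set.range v)

/-- The centroid (center of gravity) of the simplex with vertices `v`. -/
def simplexCentroid {n : ℕ} (v : Fin (n + 1) → EuclideanSpace ℝ (Fin n)) :
    EuclideanSpace ℝ (Fin n) :=
  Finset.univ.centroid ℝ v

/-- `σS`: homothetic copy of the simplex `S` with center at its centroid and ratio `σ`. -/
def simplexHomothet {n : ℕ} (v : Fin (n + 1) → EuclideanSpace ℝ (Fin n)) (σ : ℝ) :
    Set (EuclideanSpace ℝ (Fin n)) :=
  homothet (simplexCentroid v) σ (simplexSet v)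

/-- The absorption index `ξ(Ω;S)`: minimal `σ ≥ 1` with `Ω ⊆ σS`. -/
def xiInd {n : ℕ} (Ω : Set (EuclideanSpace ℝ (Fin n)))
    (v : Fin (n + 1) → EuclideanSpace ℝ (Fin n)) : ℝ :=
  sInf {σ : ℝ | 1 ≤ σ ∧ Ω ⊆ simplexHomothet v σ}

/-- `α(Ω;S)`: minimal `σ > 0` such that `Ω` is contained in a translate of `σS`. -/
def alphaInd {n : ℕ} (Ω : Set (EuclideanSpace ℝ (Fin n)))
    (v : Fin (n + 1) → EuclideanSpace ℝ (Fin n)) : ℝ :=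
  sInf {σ : ℝ | 0 < σ ∧ ∃ t : EuclideanSpace ℝ (Fin n),
    Ω ⊆ (fun x => t + x) '' simplexHomothet v σ}

/-- `lam` is the family of basic Lagrange polynomials of the simplex with vertices `v`:
affine maps with `lam j (v k) = δ_{jk}`. -/
def IsLagrangeBasis {n : ℕ} (v : Fin (n + 1) → EuclideanSpace ℝ (Fin n))
    (lam : Fin (n + 1) → (EuclideanSpace ℝ (Fin n) →ᵃ[ℝ] ℝ)) : Prop :=
  ∀ j k, lam j (v k) = if j = k then (1 : ℝ) else 0

/-- The `i`-th axial diameter of a set: maximal length of a segment contained in it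
and parallel to the `i`-th coordinate axis. -/
def axialDiameter {n : ℕ} (i : Fin n) (S : Set (EuclideanSpace ℝ (Fin n))) : ℝ :=
  sSup {t : ℝ | 0 ≤ t ∧ ∃ x, x ∈ S ∧ x + t • (EuclideanSpace.single i (1 : ℝ)) ∈ S}

/-- Norm of the interpolation projector with Lagrange basis `lam`, as an operator
`C(Ω) → C(Ω)`: it equals `max_{x ∈ Ω} Σ_j |λ_j(x)|`. -/
def projNorm {n : ℕ} (Ω : Set (EuclideanSpace ℝ (Fin n)))
    (lam : Fin (n + 1) → (EuclideanSpace ℝ (Fin n) →ᵃ[ℝ] ℝ)) : ℝ :=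
  sSup ((fun x => ∑ j, |lam j x|) '' Ω)

/-- `θ_n(Ω)`: the minimal norm of an interpolation projector with nodes in `Ω`. -/
def thetaMin (n : ℕ) (Ω : Set (EuclideanSpace ℝ (Fin n))) : ℝ :=
  sInf {t : ℝ | ∃ v : Fin (n + 1) → EuclideanSpace ℝ (Fin n),
    ∃ lam : Fin (n + 1) → (EuclideanSpace ℝ (Fin n) →ᵃ[ℝ] ℝ),
      AffineIndependent ℝ v ∧ (∀ j, v j ∈ Ω) ∧ IsLagrangeBasis v lam ∧
      t = projNorm Ω lam}

/-- `ξ_n`: minimal absorption index of the unit cube by a contained nondegenerate simplex. -/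
def xiMin (n : ℕ) : ℝ :=
  sInf {t : ℝ | ∃ v : Fin (n + 1) → EuclideanSpace ℝ (Fin n),
    AffineIndependent ℝ v ∧ simplexSet v ⊆ unitCube n ∧ t = xiInd (unitCube n) v}

/-- The standardized Legendre polynomial `χ_n` (Rodrigues formula). -/
def legendreChi (n : ℕ) (t : ℝ) : ℝ :=
  (1 / (2 ^ n * (n.factorial : ℝ))) * iteratedDeriv n (fun s : ℝ => (s ^ 2 - 1) ^ n) t

/-- The inverse of `χ_n` on the half-axis `[1, +∞)`. -/
def legendreInv (n : ℕ) (y : ℝ) : ℝ :=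
  Function.invFunOn (legendreChi n) (Set.Ici 1) y

/-- `ν_n`: the maximal volume of an `n`-dimensional simplex contained in `Q_n`. -/
def maxSimplexVol (n : ℕ) : ℝ :=
  sSup {t : ℝ | ∃ v : Fin (n + 1) → EuclideanSpace ℝ (Fin n),
    AffineIndependent ℝ v ∧ simplexSet v ⊆ unitCube n ∧
    t = (volume (simplexSet v)).toReal}

/-- `h_n`: the maximal determinant of an `n×n` matrix with entries in `{0,1}`. -/
def maxDet01 (n : ℕ) : ℝ :=
  sSup {d : ℝ | ∃ M : Matrix (Fin n) (Fin n) ℝ,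
    (∀ i j, M i j = 0 ∨ M i j = 1) ∧ d = M.det}

/-- `σ_n`: the volume of a regular `n`-dimensional simplex inscribed into `B_n`. -/
def regSimplexVol (n : ℕ) : ℝ :=
  sSup {t : ℝ | ∃ v : Fin (n + 1) → EuclideanSpace ℝ (Fin n),
    AffineIndependent ℝ v ∧ (∃ e : ℝ, ∀ j k, j ≠ k → dist (v j) (v k) = e) ∧
    (∀ j, ‖v j‖ = 1) ∧ t = (volume (simplexSet v)).toReal}

end

/-! Let `λ_j` be the barycentric coordinates of `S`. From `Q_n ⊆ nS` we get `λ_j ≥ (1 - n)/(n + 1)`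
on `Q_n`. The reflection of the vertex `v_j` through the centre `c` of the cube lies in `Q_n`, and
`c` is the midpoint of the two, so `λ_j(c) ≥ (1 + (1 - n)/(n + 1))/2 = 1/(n + 1)` for every `j`;
as the `λ_j(c)` sum to `1`, `c` is the centroid of `S`. Since the vertices of `S` are vertices of
the cube, the first coordinate of the centroid is `k/(n + 1)` for an integer `k`, and it equals
`1/2` only if `n` is odd. -/

namespace AffineBasis

variable {ι k E : Type*} [Fintype ι] [Field k] [LinearOrder k] [IsStrictOrderedRing k]
  [AddCommGroup E] [Module k E] (b : AffineBasis ι k E)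

theorem one_sub_div_card_le_coord_homothety_centroid {y : E} (hy : y ∈ convexHull k (range b))
    {σ : k} (hσ : 0 ≤ σ) (j : ι) :
    (1 - σ) / Fintype.card ι ≤ b.coord j (AffineMap.homothety (univ.centroid k b) σ y) := by
  have hy' : 0 ≤ b.coord j y := by
    rw [b.convexHull_eq_nonneg_coord] at hy
    exact hy j
  rw [AffineMap.homothety_eq_lineMap, AffineMap.apply_lineMap,
    b.coord_apply_centroid (mem_univ j), AffineMap.lineMap_apply_module, card_univ,
    smul_eq_mul, smul_eq_mul, ← div_eq_mul_inv]
  linarith [mul_nonneg hσ hy']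

theorem eq_centroid_of_forall_inv_card_le_coord {x : E}
    (h : ∀ j, (Fintype.card ι : k)⁻¹ ≤ b.coord j x) : x = univ.centroid k b := by
  have := b.nonempty
  have hsum : ∑ j, b.coord j x = ∑ _j : ι, (Fintype.card ι : k)⁻¹ := by
    rw [b.sum_coord_apply_eq_one, sum_const, card_univ, nsmul_eq_mul,
      mul_inv_cancel₀ (by positivity)]
  have hcoord := (sum_eq_sum_iff_of_le fun j _ => h j).mp hsum.symm
  exact b.ext_elem fun j => by
    rw [← hcoord j (mem_univ j), b.coord_apply_centroid (mem_univ j), card_univ]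

theorem eq_centroid_of_pointReflection_mem_homothety (m : E)
    (h : ∀ j, Equiv.pointReflection m (b j) ∈
      AffineMap.homothety (univ.centroid k b) ((Fintype.card ι : k) - 1) ''
        convexHull k (range b)) :
    m = univ.centroid k b := by
  have hN : (1 : k) ≤ Fintype.card ι := Nat.one_le_cast.mpr (Fintype.card_pos_iff.mpr b.nonempty)
  refine b.eq_centroid_of_forall_inv_card_le_coord fun j => ?_
  obtain ⟨y, hy, hyr⟩ := h j
  have hlow := b.one_sub_div_card_le_coord_homothety_centroid hy (sub_nonneg.mpr hN) j
  rw [hyr, div_le_iff₀ (by linarith)] at hlow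
  have hmid : b.coord j m = (1 + b.coord j (Equiv.pointReflection m (b j))) / 2 := by
    conv_lhs => rw [← midpoint_pointReflection_right (R := k) m (b j)]
    rw [AffineMap.map_midpoint, b.coord_apply_eq, midpoint_eq_smul_add, smul_eq_mul,
      invOf_eq_inv, inv_mul_eq_div]
  rw [hmid, inv_eq_one_div, div_le_div_iff₀ (by linarith) two_pos]
  nlinarith

end AffineBasis

theorem Finset.sum_eq_card_filter_eq_one {ι R : Type*} [AddCommMonoidWithOne R] [DecidableEq R]
    (s : Finset ι) {f : ι → R} (hf : ∀ j ∈ s, f j = 0 ∨ f j = 1) :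
    ∑ j ∈ s, f j = #{j ∈ s | f j = 1} := by
  rw [natCast_card_filter]
  refine sum_congr rfl fun j hj => ?_
  rcases hf j hj with h | h <;> simp [h]

theorem EuclideanSpace.centroid_apply {ι : Type*} {n : ℕ} {s : Finset ι} (hs : s.Nonempty)
    (v : ι → EuclideanSpace ℝ (Fin n)) (i : Fin n) :
    s.centroid ℝ v i = (∑ j ∈ s, v j i) / #s := by
  rw [centroid_def, affineCombination_eq_linear_combination _ _ _
    (s.sum_centroidWeights_eq_one_of_nonempty ℝ hs)]
  simp [centroidWeights_apply, div_eq_inv_mul, mul_sum]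

theorem simplexHomothet_eq_image_homothety {n : ℕ} (v : Fin (n + 1) → EuclideanSpace ℝ (Fin n))
    (σ : ℝ) : simplexHomothet v σ = AffineMap.homothety (simplexCentroid v) σ '' simplexSet v := by
  ext
  simp [simplexHomothet, homothet, AffineMap.homothety_apply, add_comm]

noncomputable def cubeCenter (n : ℕ) : EuclideanSpace ℝ (Fin n) := WithLp.toLp 2 fun _ => 1 / 2

theorem pointReflection_cubeCenter_mem_unitCube {n : ℕ} {x : EuclideanSpace ℝ (Fin n)}
    (hx : x ∈ unitCube n) : Equiv.pointReflection (cubeCenter n) x ∈ unitCube n := by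
  intro i
  obtain ⟨hx0, hx1⟩ := hx i
  simp only [Equiv.pointReflection_apply, vsub_eq_sub, vadd_eq_add, Set.mem_Icc]
  simp only [cubeCenter, PiLp.add_apply, PiLp.sub_apply]
  constructor <;> linarith

/-- If `n` is even, no nondegenerate simplex with all vertices among the
vertices of `Q_n` satisfies `S ⊆ Q_n ⊆ nS`. -/
theorem no_cube_vertex_simplex_absorbing_even (n : ℕ) (hn : 0 < n) (he : Even n) :
    ¬ ∃ v : Fin (n + 1) → EuclideanSpace ℝ (Fin n),
        AffineIndependent ℝ v ∧ (∀ j, v j ∈ cubeVertices n) ∧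
        simplexSet v ⊆ unitCube n ∧ unitCube n ⊆ simplexHomothet v n := by
  rintro ⟨v, hind, hvert, hS, habs⟩
  obtain ⟨b, rfl⟩ : ∃ b : AffineBasis (Fin (n + 1)) ℝ (EuclideanSpace ℝ (Fin n)), ⇑b = v :=
    ⟨⟨v, hind, hind.affineSpan_eq_top_iff_card_eq_finrank_add_one.mpr (by simp)⟩, rfl⟩
  have hcenter : cubeCenter n = simplexCentroid b := by
    refine b.eq_centroid_of_pointReflection_mem_homothety _ fun j => ?_
    have hj : b j ∈ unitCube n := hS (subset_convexHull ℝ _ (mem_range_self j))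
    have hmem := habs (pointReflection_cubeCenter_mem_unitCube hj)
    rw [simplexHomothet_eq_image_homothety] at hmem
    rwa [Fintype.card_fin, Nat.cast_add_one, add_sub_cancel_right]
  have hi := congrArg (· ⟨0, hn⟩) hcenter
  simp only [cubeCenter, simplexCentroid, EuclideanSpace.centroid_apply univ_nonempty, card_univ,
    Fintype.card_fin, sum_eq_card_filter_eq_one _ fun j _ => hvert j ⟨0, hn⟩] at hi
  set k := #{j | b j ⟨0, hn⟩ = 1}
  have hk : n + 1 = 2 * k := by
    field_simp at hi
    exact_mod_cast hi
  obtain ⟨m, rfl⟩ := he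
  omega
end

section
/- Suppose S is a nondegenerate n-dimensional simplex with S ⊆ Q_n ⊆ nS. Then replacing any vertex of S by an arbitrary point of Q_n does not increase the volume of the simplex: for every j and every y ∈ Q_n, the simplex S′ obtained from S by replacing x^(j) with y satisfies vol(S′) ≤ vol(S). -/
open Set MeasureTheory Finset Metric

/-! Let `λ_0, …, λ_n` be the barycentric coordinates of `S`. The affine map
`x ↦ x + λ_j(x) • (y - x^(j))` carries `S` onto `S'`, and its linear part is a transvection of
determinant `λ_j(y)`; so `vol S' = |λ_j(y)| vol S` and it suffices to show `|λ_j| ≤ 1` on `Q_n`.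

The inclusion `Q_n ⊆ nS` gives `λ_k ≥ (1 - n)/(n + 1)` on `Q_n`. For the upper bound use the
symmetry `x ↦ 𝟙 - x` of the cube (`𝟙` the all-ones vector): `λ(x) + λ(𝟙 - x) = λ(0) + λ(𝟙)`
for affine `λ`, hence `∑_k λ_k(z_k) + ∑_k λ_k(𝟙 - z_k) = 2` for any points `z_k`. With `z_j = y` and `z_k = x^(k)`
otherwise, this reads `λ_j(y) + n ≤ 2 - (n + 1) (1 - n)/(n + 1) = n + 1`. -/

namespace AffineBasis

variable {ι k V : Type*} [Fintype ι] [AddCommGroup V]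

section Ring

variable [Ring k] [Module k V] (b : AffineBasis ι k V)

theorem sum_coord_add_sum_coord_sub (s : V) (x : ι → V) :
    ∑ i, b.coord i (x i) + ∑ i, b.coord i (s - x i) = 2 := by
  have hpair : ∀ (f : V →ᵃ[k] k) (x : V), f x + f (s - x) = f 0 + f s := by
    intro f x
    have e : ∀ z, f z = f.linear z + f 0 := fun z => congrFun f.decomp z
    rw [e x, e (s - x), e s, map_sub]
    abel
  rw [← Finset.sum_add_distrib, Finset.sum_congr rfl fun i _ => hpair (b.coord i) (x i),
    Finset.sum_add_distrib, b.sum_coord_apply_eq_one, b.sum_coord_apply_eq_one]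
  norm_num

theorem sum_coord_update [DecidableEq ι] (j : ι) (y : V) :
    ∑ i, b.coord i (Function.update b j y i) = b.coord j y + (Fintype.card ι - 1) := by
  have := b.nonempty
  rw [← Finset.add_sum_erase _ _ (Finset.mem_univ j), Function.update_self]
  congr 1
  rw [Finset.sum_congr rfl fun i hi => by
    rw [Function.update_of_ne (Finset.ne_of_mem_erase hi), b.coord_apply_eq]]
  simp [Finset.card_erase_of_mem, Nat.cast_pred Fintype.card_pos]

theorem coord_le_two_sub_of_sub_mem [PartialOrder k] [IsOrderedRing k] {Ω : Set V} {s : V}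
    (hΩ : ∀ x ∈ Ω, s - x ∈ Ω) (hb : ∀ i, b i ∈ Ω) {c : k}
    (hc : ∀ i, ∀ x ∈ Ω, c ≤ b.coord i x) {j : ι} {y : V} (hy : y ∈ Ω) :
    b.coord j y ≤ 2 - (Fintype.card ι - 1) - Fintype.card ι * c := by
  classical
  have hsum := b.sum_coord_add_sum_coord_sub s (Function.update b j y)
  rw [b.sum_coord_update] at hsum
  have hmem : ∀ i, Function.update b j y i ∈ Ω := by
    intro i
    rcases eq_or_ne i j with rfl | hij
    · simpa using hy
    · simpa [hij] using hb i
  have hbound : Fintype.card ι * c ≤ ∑ i, b.coord i (s - Function.update b j y i) := by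
    simpa [nsmul_eq_mul] using
      Finset.card_nsmul_le_sum univ _ c fun i _ => hc i _ (hΩ _ (hmem i))
  calc b.coord j y = 2 - (Fintype.card ι - 1) - ∑ i, b.coord i (s - Function.update b j y i) := by
        rw [← hsum]; abel
    _ ≤ 2 - (Fintype.card ι - 1) - Fintype.card ι * c := sub_le_sub_left hbound _

end Ring

theorem le_coord_lineMap_centroid [Field k] [LinearOrder k] [IsStrictOrderedRing k] [Module k V]
    (b : AffineBasis ι k V) {x : V} (hx : x ∈ convexHull k (range b)) {σ : k} (hσ : 0 ≤ σ)
    (i : ι) : (1 - σ) / Fintype.card ι ≤ b.coord i (AffineMap.lineMap (univ.centroid k b) x σ) := by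
  rw [b.convexHull_eq_nonneg_coord] at hx
  rw [AffineMap.apply_lineMap, b.coord_apply_centroid (mem_univ i), AffineMap.lineMap_apply_module,
    smul_eq_mul, smul_eq_mul, card_univ, div_eq_mul_inv]
  exact le_add_of_nonneg_right (mul_nonneg hσ (hx i))

end AffineBasis

theorem AffineBasis.addHaar_convexHull_update {ι E : Type*} [NormedAddCommGroup E]
    [NormedSpace ℝ E] [FiniteDimensional ℝ E] [MeasurableSpace E] [BorelSpace E]
    (μ : Measure E) [μ.IsAddHaarMeasure] [DecidableEq ι] (b : AffineBasis ι ℝ E) (j : ι) (y : E) :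
    μ (convexHull ℝ (range (Function.update b j y))) =
      ENNReal.ofReal |b.coord j y| * μ (convexHull ℝ (range b)) := by
  set w := y - b j
  set L := LinearMap.transvection (b.coord j).linear w
  set T : E →ᵃ[ℝ] E := L.toAffineMap + AffineMap.const ℝ E (b.coord j 0 • w)
  have hcoord : ∀ x, b.coord j x = (b.coord j).linear x + b.coord j 0 :=
    fun x => congrFun (b.coord j).decomp x
  have hT : ∀ x, T x = b.coord j 0 • w + L x := fun x => add_comm _ _
  have hTb : ⇑T ∘ b = Function.update b j y := by
    funext k
    rw [Function.comp_apply, hT, LinearMap.transvection.apply, add_left_comm, ← add_smul,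
      add_comm (b.coord j 0), ← hcoord]
    rcases eq_or_ne k j with rfl | hkj
    · simp [w]
    · simp [hkj, b.coord_apply_ne hkj.symm]
  have hdet : L.det = b.coord j y := by
    have hcy := hcoord y
    have hcbj := hcoord (b j)
    rw [b.coord_apply_eq] at hcbj
    rw [LinearMap.transvection.det, map_sub]
    linarith
  calc μ (convexHull ℝ (range (Function.update b j y)))
      = μ ((b.coord j 0 • w + ·) '' (L '' convexHull ℝ (range b))) := by
        rw [← hTb, range_comp, ← AffineMap.image_convexHull, Set.image_image]
        exact congrArg μ (image_congr fun x _ => hT x)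
    _ = ENNReal.ofReal |b.coord j y| * μ (convexHull ℝ (range b)) := by
        rw [Set.image_add_left, measure_preimage_add, Measure.addHaar_image_linearMap, hdet]

section

variable {n : ℕ}

def simplexBasis (v : Fin (n + 1) → EuclideanSpace ℝ (Fin n)) (hv : AffineIndependent ℝ v) :
    AffineBasis (Fin (n + 1)) ℝ (EuclideanSpace ℝ (Fin n)) :=
  ⟨v, hv, by simp [hv.affineSpan_eq_top_iff_card_eq_finrank_add_one]⟩

theorem le_coord_of_mem_simplexHomothet (v : Fin (n + 1) → EuclideanSpace ℝ (Fin n))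
    (hv : AffineIndependent ℝ v) {σ : ℝ} (hσ : 0 ≤ σ) {z : EuclideanSpace ℝ (Fin n)}
    (hz : z ∈ simplexHomothet v σ) (i : Fin (n + 1)) :
    (1 - σ) / (n + 1) ≤ (simplexBasis v hv).coord i z := by
  obtain ⟨x, hx, rfl⟩ := hz
  have h := (simplexBasis v hv).le_coord_lineMap_centroid hx hσ i
  rw [AffineMap.lineMap_apply, vsub_eq_sub, vadd_eq_add, add_comm (σ • _)] at h
  simp only [Fintype.card_fin, Nat.cast_succ] at h
  exact h

theorem one_sub_mem_unitCube {x : EuclideanSpace ℝ (Fin n)} (hx : x ∈ unitCube n) :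
    WithLp.toLp 2 (fun _ => 1) - x ∈ unitCube n := fun i => by
  simpa [and_comm] using hx i

end

theorem quasi_rigid_volume_not_increase_general (n : ℕ)
    (v : Fin (n + 1) → EuclideanSpace ℝ (Fin n)) (hv : AffineIndependent ℝ v)
    (hS : simplexSet v ⊆ unitCube n) (hQ : unitCube n ⊆ simplexHomothet v n)
    (j : Fin (n + 1)) (y : EuclideanSpace ℝ (Fin n)) (hy : y ∈ unitCube n) :
    volume (simplexSet (Function.update v j y)) ≤ volume (simplexSet v) := by
  set b := simplexBasis v hv
  have hlow : ∀ i, ∀ z ∈ unitCube n, ((1 : ℝ) - n) / (n + 1) ≤ b.coord i z :=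
    fun i z hz => le_coord_of_mem_simplexHomothet v hv n.cast_nonneg (hQ hz) i
  have hvert : ∀ i, b i ∈ unitCube n := fun i => hS (subset_convexHull ℝ _ (mem_range_self i))
  have hup := b.coord_le_two_sub_of_sub_mem (fun _ => one_sub_mem_unitCube) hvert hlow hy (j := j)
  have hcard : ((n : ℝ) + 1) * ((1 - n) / (n + 1)) = 1 - n := mul_div_cancel₀ _ (by positivity)
  have habs : |b.coord j y| ≤ 1 := by
    rw [Fintype.card_fin, Nat.cast_succ, hcard] at hup
    rw [abs_le]
    constructor
    · refine le_trans ?_ (hlow j y hy)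
      rw [le_div_iff₀ (by positivity)]
      linarith
    · linarith
  calc volume (simplexSet (Function.update v j y))
      = ENNReal.ofReal |b.coord j y| * volume (simplexSet v) :=
        b.addHaar_convexHull_update volume j y
    _ ≤ volume (simplexSet v) := mul_le_of_le_one_left' (ENNReal.ofReal_le_one.mpr habs)

/-- If `S ⊆ Q_n ⊆ nS`, then replacing any vertex of `S` by any point of
`Q_n` does not increase the volume of the simplex. -/
theorem quasi_rigid_volume_not_increase (n : ℕ) (hn : 0 < n)
    (v : Fin (n + 1) → EuclideanSpace ℝ (Fin n)) (hv : AffineIndependent ℝ v)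
    (hS : simplexSet v ⊆ unitCube n) (hQ : unitCube n ⊆ simplexHomothet v n)
    (j : Fin (n + 1)) (y : EuclideanSpace ℝ (Fin n)) (hy : y ∈ unitCube n) :
    volume (simplexSet (Function.update v j y)) ≤ volume (simplexSet v) :=
  quasi_rigid_volume_not_increase_general n v hv hS hQ j y hy
end

section
/- Let M be a nondegenerate n×n matrix with entries in {0,1}, and let A be the (n+1)×(n+1) matrix obtained from M by adding the (n+1)-th row (0,0,…,0,1) and the (n+1)-th column consisting entirely of 1's. Write A^{-1} = (l_{ij}). Then: (i) for each i = 1,…,n, Σ_{j=1}^{n+1} |l_{ij}| ≥ 2; (ii) if |det M| = h_n, then Σ_{j=1}^{n+1} |l_{ij}| = 2 for all i = 1,…,n; (iii) if Σ_{j=1}^{n+1} |l_{ij}| > 2 for some i, then |det M| < h_n. -/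
open Set MeasureTheory Finset Metric

/-!
Let `ℓ` be the `i`-th row of `M⁻¹`. The `i`-th row of `A⁻¹` is `(ℓ, -∑ ℓ)`, so its absolute
row sum is `∑ |ℓⱼ| + |∑ ℓⱼ|`. Since `ℓ` pairs to `1` with the `i`-th column of `M`, a
`(0,1)`-vector, this sum is at least `2`. By Cramer's rule, replacing the `i`-th column of `M`
by a `(0,1)`-vector `c` multiplies the determinant by `ℓ ⬝ᵥ c`; when `|det M| = h_n` this forces
`|ℓ ⬝ᵥ c| ≤ 1` for all such `c`, so the positive and the negative parts of `ℓ` each have mass at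
most `1`, and the row sum is at most `2`.
-/

section BorderedMatrix

open Matrix

variable {R : Type*} [CommRing R] {n : ℕ}

def borderedMatrix (M : Matrix (Fin n) (Fin n) R) : Matrix (Fin (n + 1)) (Fin (n + 1)) R :=
  reindex finSumFinEquiv finSumFinEquiv (fromBlocks M (of fun _ _ => 1) 0 1)

theorem of_dite_eq_borderedMatrix (M : Matrix (Fin n) (Fin n) R) :
    (of fun i j : Fin (n + 1) =>
      if hi : (i : ℕ) < n then
        (if hj : (j : ℕ) < n then M ⟨i, hi⟩ ⟨j, hj⟩ else 1)
      else (if (j : ℕ) < n then 0 else 1)) = borderedMatrix M := by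
  ext i j
  induction i using Fin.lastCases <;> induction j using Fin.lastCases <;>
    simp [borderedMatrix, one_apply]

variable {M : Matrix (Fin n) (Fin n) R}

theorem inv_borderedMatrix_castSucc_castSucc (hM : IsUnit M.det) (i j : Fin n) :
    (borderedMatrix M)⁻¹ i.castSucc j.castSucc = M⁻¹ i j := by
  rw [borderedMatrix, inv_reindex, inv_fromBlocks_zero₂₁_of_isUnit_iff]
  · simp
  · simp [(isUnit_iff_isUnit_det M).mpr hM]

theorem inv_borderedMatrix_castSucc_last (hM : IsUnit M.det) (i : Fin n) :
    (borderedMatrix M)⁻¹ i.castSucc (Fin.last n) = -∑ k, M⁻¹ i k := by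
  rw [borderedMatrix, inv_reindex, inv_fromBlocks_zero₂₁_of_isUnit_iff]
  · simp [mul_apply]
  · simp [(isUnit_iff_isUnit_det M).mpr hM]

theorem sum_abs_inv_borderedMatrix_castSucc [LinearOrder R] [IsStrictOrderedRing R]
    (hM : IsUnit M.det) (i : Fin n) :
    ∑ j, |(borderedMatrix M)⁻¹ i.castSucc j| = ∑ j, |M⁻¹ i j| + |∑ j, M⁻¹ i j| := by
  simp only [Fin.sum_univ_castSucc, inv_borderedMatrix_castSucc_castSucc hM,
    inv_borderedMatrix_castSucc_last hM, abs_neg]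

end BorderedMatrix

section RowSums

open Matrix

variable {R ι : Type*} [CommRing R]

theorem det_updateCol_eq_det_mul_dotProduct [Fintype ι] [DecidableEq ι]
    {M : Matrix ι ι R} (hM : IsUnit M.det) (i : ι) (c : ι → R) :
    (M.updateCol i c).det = M.det * (M⁻¹ i ⬝ᵥ c) := by
  rw [← cramer_apply, ← det_smul_inv_mulVec_eq_cramer M c hM]
  rfl

variable [LinearOrder R] [IsStrictOrderedRing R] [Fintype ι]

theorem two_le_sum_abs_add_abs_sum (ℓ m : ι → R) (hm : ∀ j, m j = 0 ∨ m j = 1)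
    (h : ℓ ⬝ᵥ m = 1) : 2 ≤ ∑ j, |ℓ j| + |∑ j, ℓ j| := by
  have hterm : ∀ j, 2 * (ℓ j * m j) ≤ |ℓ j| + ℓ j := fun j => by
    rcases hm j with h0 | h1
    · simpa [h0, ← neg_le_iff_add_nonneg] using neg_le_abs (ℓ j)
    · simp only [h1, mul_one]; linarith [le_abs_self (ℓ j)]
  calc (2 : R) = ∑ j, 2 * (ℓ j * m j) := by rw [← mul_sum, ← dotProduct, h, mul_one]
    _ ≤ ∑ j, (|ℓ j| + ℓ j) := sum_le_sum fun j _ => hterm j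
    _ ≤ ∑ j, |ℓ j| + |∑ j, ℓ j| := by rw [sum_add_distrib]; gcongr; exact le_abs_self _

theorem sum_abs_add_abs_sum_le_two (ℓ : ι → R)
    (h : ∀ c : ι → R, (∀ j, c j = 0 ∨ c j = 1) → |ℓ ⬝ᵥ c| ≤ 1) :
    ∑ j, |ℓ j| + |∑ j, ℓ j| ≤ 2 := by
  classical
  set s : ι → R := fun j => if 0 < ℓ j then 1 else 0
  have hpos := abs_le.mp (h s fun j => by by_cases hj : 0 < ℓ j <;> simp [s, hj])
  have hneg := abs_le.mp (h (1 - s) fun j => by by_cases hj : 0 < ℓ j <;> simp [s, hj])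
  have habs : ∑ j, |ℓ j| = ℓ ⬝ᵥ s - ℓ ⬝ᵥ (1 - s) := by
    simp only [dotProduct, ← sum_sub_distrib]
    refine sum_congr rfl fun j _ => ?_
    by_cases hj : 0 < ℓ j
    · simp [s, hj, abs_of_pos hj]
    · simp [s, hj, abs_of_nonpos (not_lt.mp hj)]
  have hsum : ∑ j, ℓ j = ℓ ⬝ᵥ s + ℓ ⬝ᵥ (1 - s) := by
    rw [← dotProduct_add, add_sub_cancel, dotProduct_one]
  rw [habs, hsum]
  rcases abs_cases (ℓ ⬝ᵥ s + ℓ ⬝ᵥ (1 - s)) with ⟨he, _⟩ | ⟨he, _⟩ <;> rw [he] <;> linarith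

end RowSums

section MaxDet01

open Matrix

variable {n : ℕ} {N : Matrix (Fin n) (Fin n) ℝ}

theorem det_nonneg_of_zeroOne_of_le_one (hN : ∀ i j, N i j = 0 ∨ N i j = 1) (hn : n ≤ 1) :
    0 ≤ N.det := by
  interval_cases n
  · simp
  · rcases hN 0 0 with h | h <;> simp [h]

/-- For `n ≥ 2` a row swap turns a negative determinant into a positive one; for `n ≤ 1`
no `(0,1)`-matrix has negative determinant. -/
theorem abs_det_le_maxDet01 (hN : ∀ i j, N i j = 0 ∨ N i j = 1) : |N.det| ≤ maxDet01 n := by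
  have hbdd : BddAbove {d : ℝ | ∃ M : Matrix (Fin n) (Fin n) ℝ,
      (∀ i j, M i j = 0 ∨ M i j = 1) ∧ d = M.det} := by
    refine ⟨n.factorial, ?_⟩
    rintro _ ⟨M, hM, rfl⟩
    have hM1 : ∀ i j, |M i j| ≤ 1 := fun i j => by rcases hM i j with h | h <;> simp [h]
    simpa using (le_abs_self _).trans (det_le (abv := AbsoluteValue.abs) hM1)
  rcases le_or_gt 0 N.det with hpos | hneg
  · rw [abs_of_nonneg hpos]
    exact le_csSup hbdd ⟨N, hN, rfl⟩
  · obtain ⟨a, b, hab⟩ : ∃ a b : Fin n, a ≠ b := Fintype.exists_pair_of_one_lt_card <| by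
      by_contra! hn
      exact hneg.not_ge (det_nonneg_of_zeroOne_of_le_one hN (by simpa using hn))
    rw [abs_of_neg hneg]
    refine le_csSup hbdd ⟨N.submatrix (Equiv.swap a b) id, fun i j => hN _ _, ?_⟩
    rw [det_permute, Equiv.Perm.sign_swap hab]
    simp

theorem abs_inv_dotProduct_le_one_of_abs_det_eq_maxDet01 (hN : ∀ i j, N i j = 0 ∨ N i j = 1)
    (hdet : N.det ≠ 0) (hmax : |N.det| = maxDet01 n) (i : Fin n) (c : Fin n → ℝ)
    (hc : ∀ j, c j = 0 ∨ c j = 1) : |N⁻¹ i ⬝ᵥ c| ≤ 1 := by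
  have hNc : ∀ k j, N.updateCol i c k j = 0 ∨ N.updateCol i c k j = 1 := fun k j => by
    rw [updateCol_apply]; split_ifs
    exacts [hc k, hN k j]
  have := abs_det_le_maxDet01 hNc
  rw [det_updateCol_eq_det_mul_dotProduct hdet.isUnit, abs_mul, ← hmax] at this
  exact (mul_le_iff_le_one_right (abs_pos.mpr hdet)).mp this

end MaxDet01

theorem maxDet01_row_sums_general (n : ℕ) (M : Matrix (Fin n) (Fin n) ℝ)
    (hM : ∀ i j, M i j = 0 ∨ M i j = 1) (hdet : M.det ≠ 0)
    (A : Matrix (Fin (n + 1)) (Fin (n + 1)) ℝ)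
    (hA : A = Matrix.of fun i j : Fin (n + 1) =>
      if hi : (i : ℕ) < n then
        (if hj : (j : ℕ) < n then M ⟨i, hi⟩ ⟨j, hj⟩ else 1)
      else (if (j : ℕ) < n then 0 else 1)) :
    (∀ i : Fin n, 2 ≤ ∑ j : Fin (n + 1), |A⁻¹ i.castSucc j|) ∧
    (|M.det| = maxDet01 n → ∀ i : Fin n, ∑ j : Fin (n + 1), |A⁻¹ i.castSucc j| = 2) ∧
    ((∃ i : Fin n, 2 < ∑ j : Fin (n + 1), |A⁻¹ i.castSucc j|) → |M.det| < maxDet01 n) := by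
  have hrow (i : Fin n) :
      ∑ j, |A⁻¹ i.castSucc j| = ∑ j, |M⁻¹ i j| + |∑ j, M⁻¹ i j| := by
    rw [hA, of_dite_eq_borderedMatrix, sum_abs_inv_borderedMatrix_castSucc hdet.isUnit]
  have lower (i : Fin n) : 2 ≤ ∑ j, |A⁻¹ i.castSucc j| := by
    have hdiag : M⁻¹ i ⬝ᵥ (fun j => M j i) = 1 := by
      rw [← Matrix.mul_apply', Matrix.nonsing_inv_mul M hdet.isUnit, Matrix.one_apply_eq]
    rw [hrow]
    exact two_le_sum_abs_add_abs_sum _ _ (fun j => hM j i) hdiag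
  have upper (hmax : |M.det| = maxDet01 n) (i : Fin n) : ∑ j, |A⁻¹ i.castSucc j| = 2 := by
    refine le_antisymm ?_ (lower i)
    rw [hrow]
    exact sum_abs_add_abs_sum_le_two _
      (abs_inv_dotProduct_le_one_of_abs_det_eq_maxDet01 hM hdet hmax i)
  refine ⟨lower, upper, ?_⟩
  rintro ⟨i, hi⟩
  exact (abs_det_le_maxDet01 hM).lt_of_ne fun hmax => hi.ne' (upper hmax i)

/-- Theorem 9.1: Let `M` be a nondegenerate `(0,1)`-matrix of order `n`,
`A` the `(n+1)×(n+1)` matrix obtained by appending the row `(0,…,0,1)` and a column of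
`1`'s, and `A⁻¹ = (l_{ij})`. Then (i) `Σ_j |l_{ij}| ≥ 2` for `i ≤ n`;
(ii) if `|det M| = h_n` then `Σ_j |l_{ij}| = 2` for all `i ≤ n`;
(iii) if `Σ_j |l_{ij}| > 2` for some `i ≤ n` then `|det M| < h_n`. -/
theorem maxDet01_row_sums (n : ℕ) (hn : 0 < n) (M : Matrix (Fin n) (Fin n) ℝ)
    (hM : ∀ i j, M i j = 0 ∨ M i j = 1) (hdet : M.det ≠ 0)
    (A : Matrix (Fin (n + 1)) (Fin (n + 1)) ℝ)
    (hA : A = Matrix.of fun i j : Fin (n + 1) =>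
      if hi : (i : ℕ) < n then
        (if hj : (j : ℕ) < n then M ⟨i, hi⟩ ⟨j, hj⟩ else 1)
      else (if (j : ℕ) < n then 0 else 1)) :
    (∀ i : Fin n, 2 ≤ ∑ j : Fin (n + 1), |A⁻¹ i.castSucc j|) ∧
    (|M.det| = maxDet01 n → ∀ i : Fin n, ∑ j : Fin (n + 1), |A⁻¹ i.castSucc j| = 2) ∧
    ((∃ i : Fin n, 2 < ∑ j : Fin (n + 1), |A⁻¹ i.castSucc j|) → |M.det| < maxDet01 n) :=
  maxDet01_row_sums_general n M hM hdet A hA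
end

section
/- Let S be a nondegenerate n-dimensional simplex in ℝ^n with basic Lagrange polynomial coefficients (l_{ij}), let x⁰ ∈ ℝ^n and ρ > 0, and suppose the closed ball B(x⁰;ρ) is not contained in S. Then ξ(B(x⁰;ρ);S) = (n+1)·max_{1≤j≤n+1} [ ρ·(Σ_{i=1}^{n} l_{ij}²)^{1/2} − Σ_{i=1}^{n} l_{ij}·x_i⁰ − l_{n+1,j} ] + 1. In particular, if B_n ⊄ S, then ξ(B_n;S) = (n+1)·max_{1≤j≤n+1} [ (Σ_{i=1}^{n} l_{ij}²)^{1/2} − l_{n+1,j} ] + 1. -/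
open Set MeasureTheory Finset Metric

/-!
The Lagrange polynomials `λ_j` of `S` are its barycentric coordinates, and each takes the value
`1/(n+1)` at the centroid, so `σS = {x | ∀ j, λ_j x ≥ (1 - σ)/(n+1)}` for `σ > 0`. Writing
`λ_j x = ⟪g_j, x⟫ + b_j` with `‖g_j‖ = (Σ_i l_{ij}²)^{1/2}`, the minimum of `λ_j` over
`B(x⁰;ρ)` is `λ_j x⁰ - ρ‖g_j‖` (Cauchy–Schwarz, attained at `x⁰ - ρ g_j/‖g_j‖`). Hence the
admissible ratios `σ` form the ray `[(n+1) max_j (ρ‖g_j‖ - λ_j x⁰) + 1, ∞)`, whose origin exceeds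
`1` precisely because `B(x⁰;ρ) ⊄ S = 1·S`.
-/

open scoped RealInnerProductSpace

theorem AffineBasis.eq_coord_of_apply_eq_ite {ι k V P : Type*} [Ring k] [AddCommGroup V]
    [Module k V] [AddTorsor V P] [DecidableEq ι] (b : AffineBasis ι k P) {i : ι}
    {f : P →ᵃ[k] k} (hf : ∀ j, f (b j) = if i = j then 1 else 0) : f = b.coord i :=
  AffineMap.ext_on b.tot <| by
    rintro _ ⟨j, rfl⟩
    rw [hf, b.coord_apply]

theorem forall_mem_closedBall_le_inner_add_iff {E : Type*} [NormedAddCommGroup E]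
    [InnerProductSpace ℝ E] {g x₀ : E} {ρ : ℝ} (hρ : 0 ≤ ρ) (c m : ℝ) :
    (∀ x ∈ closedBall x₀ ρ, m ≤ ⟪g, x⟫ + c) ↔ m ≤ ⟪g, x₀⟫ + c - ρ * ‖g‖ := by
  constructor
  · intro h
    rcases eq_or_ne g 0 with rfl | hg
    · simpa using h x₀ (mem_closedBall_self hρ)
    have hx : x₀ - (ρ / ‖g‖) • g ∈ closedBall x₀ ρ := by
      rw [mem_closedBall, dist_eq_norm, sub_sub_cancel_left, norm_neg, norm_smul,
        Real.norm_of_nonneg (by positivity), div_mul_cancel₀ _ (norm_ne_zero_iff.2 hg)]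
    have hmin := h _ hx
    rw [inner_sub_right, inner_smul_right, real_inner_self_eq_norm_mul_norm] at hmin
    have hρg : ρ / ‖g‖ * (‖g‖ * ‖g‖) = ρ * ‖g‖ := by field_simp
    linarith
  · intro h x hx
    have hcs : ⟪g, x₀ - x⟫ ≤ ‖g‖ * ρ :=
      (real_inner_le_norm _ _).trans <|
        mul_le_mul_of_nonneg_left (by rwa [← dist_eq_norm, dist_comm]) (norm_nonneg g)
    rw [inner_sub_right] at hcs
    linarith

section Simplex

variable {n : ℕ} {v : Fin (n + 1) → EuclideanSpace ℝ (Fin n)}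
  {lam : Fin (n + 1) → (EuclideanSpace ℝ (Fin n) →ᵃ[ℝ] ℝ)}

theorem homothet_eq_image_homothety (c : EuclideanSpace ℝ (Fin n)) (σ : ℝ)
    (S : Set (EuclideanSpace ℝ (Fin n))) : homothet c σ S = AffineMap.homothety c σ '' S := by
  unfold homothet
  congr 1
  funext x
  rw [AffineMap.homothety_apply, vsub_eq_sub, vadd_eq_add, add_comm]

theorem mem_homothet_iff {c x : EuclideanSpace ℝ (Fin n)} {σ : ℝ} (hσ : σ ≠ 0)
    {S : Set (EuclideanSpace ℝ (Fin n))} :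
    x ∈ homothet c σ S ↔ AffineMap.homothety c σ⁻¹ x ∈ S := by
  rw [homothet_eq_image_homothety,
    Set.image_eq_preimage_of_inverse (g := ⇑(AffineMap.homothety c σ⁻¹))]
  · rfl
  all_goals
    intro y
    rw [← AffineMap.homothety_mul_apply]
    simp [hσ]

theorem simplexHomothet_one (v : Fin (n + 1) → EuclideanSpace ℝ (Fin n)) :
    simplexHomothet v 1 = simplexSet v := by
  simp [simplexHomothet, homothet_eq_image_homothety, AffineMap.homothety_one]

def simplexAffineBasis (hv : AffineIndependent ℝ v) :
    AffineBasis (Fin (n + 1)) ℝ (EuclideanSpace ℝ (Fin n)) :=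
  ⟨v, hv, hv.affineSpan_eq_top_iff_card_eq_finrank_add_one.mpr (by simp)⟩

theorem IsLagrangeBasis.eq_coord (hv : AffineIndependent ℝ v) (hlam : IsLagrangeBasis v lam)
    (j : Fin (n + 1)) : lam j = (simplexAffineBasis hv).coord j :=
  (simplexAffineBasis hv).eq_coord_of_apply_eq_ite (hlam j)

theorem IsLagrangeBasis.mem_simplexSet_iff (hv : AffineIndependent ℝ v)
    (hlam : IsLagrangeBasis v lam) {x : EuclideanSpace ℝ (Fin n)} :
    x ∈ simplexSet v ↔ ∀ j, 0 ≤ lam j x := by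
  simp only [hlam.eq_coord hv]
  exact Set.ext_iff.1 (simplexAffineBasis hv).convexHull_eq_nonneg_coord x

theorem IsLagrangeBasis.apply_simplexCentroid (hv : AffineIndependent ℝ v)
    (hlam : IsLagrangeBasis v lam) (j : Fin (n + 1)) :
    lam j (simplexCentroid v) = ((n : ℝ) + 1)⁻¹ := by
  rw [hlam.eq_coord hv]
  exact ((simplexAffineBasis hv).coord_apply_centroid (Finset.mem_univ j)).trans (by simp)

theorem IsLagrangeBasis.mem_simplexHomothet_iff (hv : AffineIndependent ℝ v)
    (hlam : IsLagrangeBasis v lam) {σ : ℝ} (hσ : 0 < σ) {x : EuclideanSpace ℝ (Fin n)} :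
    x ∈ simplexHomothet v σ ↔ ∀ j, (1 - σ) / ((n : ℝ) + 1) ≤ lam j x := by
  rw [simplexHomothet, mem_homothet_iff hσ.ne', hlam.mem_simplexSet_iff hv]
  refine forall_congr' fun j => ?_
  have hval : lam j (AffineMap.homothety (simplexCentroid v) σ⁻¹ x)
      = σ⁻¹ * (lam j x - (1 - σ) / ((n : ℝ) + 1)) := by
    rw [AffineMap.homothety_eq_lineMap, AffineMap.apply_lineMap, AffineMap.lineMap_apply_ring',
      hlam.apply_simplexCentroid hv]
    field_simp
    ring
  rw [hval, mul_nonneg_iff_of_pos_left (inv_pos.2 hσ), sub_nonneg]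

theorem IsLagrangeBasis.closedBall_subset_simplexHomothet_iff (hv : AffineIndependent ℝ v)
    (hlam : IsLagrangeBasis v lam) {g : Fin (n + 1) → EuclideanSpace ℝ (Fin n)}
    {b : Fin (n + 1) → ℝ} (hlin : ∀ j x, lam j x = ⟪g j, x⟫ + b j)
    (x₀ : EuclideanSpace ℝ (Fin n)) {ρ σ : ℝ} (hρ : 0 ≤ ρ) (hσ : 0 < σ) :
    closedBall x₀ ρ ⊆ simplexHomothet v σ ↔
      ((n : ℝ) + 1) * (⨆ j, ρ * ‖g j‖ - lam j x₀) + 1 ≤ σ := by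
  have hn : (0 : ℝ) < (n : ℝ) + 1 := by positivity
  calc closedBall x₀ ρ ⊆ simplexHomothet v σ
      ↔ ∀ j, ∀ x ∈ closedBall x₀ ρ, (1 - σ) / ((n : ℝ) + 1) ≤ ⟪g j, x⟫ + b j := by
        simp only [Set.subset_def, hlam.mem_simplexHomothet_iff hv hσ, hlin]
        exact ⟨fun h j x hx => h x hx j, fun h x hx j => h j x hx⟩
    _ ↔ ∀ j, ρ * ‖g j‖ - lam j x₀ ≤ (σ - 1) / ((n : ℝ) + 1) := by
        refine forall_congr' fun j => ?_
        rw [forall_mem_closedBall_le_inner_add_iff hρ, ← hlin,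
          show (1 - σ) / ((n : ℝ) + 1) = -((σ - 1) / ((n : ℝ) + 1)) by ring]
        constructor <;> intro h <;> linarith
    _ ↔ (⨆ j, ρ * ‖g j‖ - lam j x₀) ≤ (σ - 1) / ((n : ℝ) + 1) :=
        (ciSup_le_iff (Set.finite_range _).bddAbove).symm
    _ ↔ ((n : ℝ) + 1) * (⨆ j, ρ * ‖g j‖ - lam j x₀) + 1 ≤ σ := by
        rw [le_div_iff₀ hn]
        constructor <;> intro h <;> linarith

theorem xiInd_eq_of_forall_subset_simplexHomothet_iff {Ω : Set (EuclideanSpace ℝ (Fin n))}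
    (hΩ : ¬ Ω ⊆ simplexSet v) {s : ℝ} (hs : ∀ σ, 0 < σ → (Ω ⊆ simplexHomothet v σ ↔ s ≤ σ)) :
    xiInd Ω v = s := by
  have hs1 : 1 < s := by
    rw [← simplexHomothet_one, hs 1 one_pos] at hΩ
    exact not_le.1 hΩ
  have hset : {σ : ℝ | 1 ≤ σ ∧ Ω ⊆ simplexHomothet v σ} = Set.Ici s := by
    ext σ
    constructor
    · rintro ⟨hσ, hsub⟩
      exact (hs σ (by linarith)).1 hsub
    · intro hσ
      exact ⟨hs1.le.trans hσ, (hs σ (by linarith [Set.mem_Ici.1 hσ])).2 hσ⟩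
  rw [xiInd, hset, csInf_Ici]

end Simplex

theorem xi_ball_formula_general (n : ℕ)
    (v : Fin (n + 1) → EuclideanSpace ℝ (Fin n)) (hv : AffineIndependent ℝ v)
    (l : Fin n → Fin (n + 1) → ℝ) (b : Fin (n + 1) → ℝ)
    (lam : Fin (n + 1) → (EuclideanSpace ℝ (Fin n) →ᵃ[ℝ] ℝ))
    (hlam : IsLagrangeBasis v lam)
    (hcoef : ∀ j x, lam j x = (∑ i : Fin n, l i j * x i) + b j) :
    (∀ (x0 : EuclideanSpace ℝ (Fin n)) (ρ : ℝ), 0 < ρ →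
      ¬ Metric.closedBall x0 ρ ⊆ simplexSet v →
      xiInd (Metric.closedBall x0 ρ) v =
        ((n : ℝ) + 1) * (⨆ j : Fin (n + 1),
          (ρ * Real.sqrt (∑ i : Fin n, (l i j) ^ 2) - (∑ i : Fin n, l i j * x0 i) - b j))
          + 1) ∧
    (¬ unitBall n ⊆ simplexSet v →
      xiInd (unitBall n) v =
        ((n : ℝ) + 1) * (⨆ j : Fin (n + 1),
          (Real.sqrt (∑ i : Fin n, (l i j) ^ 2) - b j)) + 1) := by
  let g : Fin (n + 1) → EuclideanSpace ℝ (Fin n) := fun j => WithLp.toLp 2 (l · j)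
  have hlin : ∀ j x, lam j x = ⟪g j, x⟫ + b j := by
    simp [g, hcoef, PiLp.inner_apply, mul_comm]
  have hnorm : ∀ j, ‖g j‖ = Real.sqrt (∑ i, l i j ^ 2) := by
    simp [g, EuclideanSpace.norm_eq]
  have hball : ∀ (x0 : EuclideanSpace ℝ (Fin n)) (ρ : ℝ), 0 < ρ →
      ¬ closedBall x0 ρ ⊆ simplexSet v →
      xiInd (closedBall x0 ρ) v =
        ((n : ℝ) + 1) * (⨆ j, (ρ * Real.sqrt (∑ i, l i j ^ 2) - (∑ i, l i j * x0 i) - b j))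
          + 1 := by
    intro x0 ρ hρ hnot
    refine xiInd_eq_of_forall_subset_simplexHomothet_iff hnot fun σ hσ => ?_
    simp only [hlam.closedBall_subset_simplexHomothet_iff hv hlin x0 hρ.le hσ, hnorm, hcoef,
      sub_add_eq_sub_sub]
  refine ⟨hball, fun hnot => ?_⟩
  rw [unitBall] at hnot ⊢
  simpa using hball 0 1 one_pos hnot

/-- Theorem 10.3: For a nondegenerate simplex `S` with Lagrange
coefficients `l`, `b` and a ball `B(x⁰;ρ) ⊄ S`:
`ξ(B(x⁰;ρ);S) = (n+1)·max_j [ρ√(Σ_i l_{ij}²) − Σ_i l_{ij}x⁰_i − b_j] + 1`;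
in particular if `B_n ⊄ S` then
`ξ(B_n;S) = (n+1)·max_j [√(Σ_i l_{ij}²) − b_j] + 1`. -/
theorem xi_ball_formula (n : ℕ) (hn : 0 < n)
    (v : Fin (n + 1) → EuclideanSpace ℝ (Fin n)) (hv : AffineIndependent ℝ v)
    (l : Fin n → Fin (n + 1) → ℝ) (b : Fin (n + 1) → ℝ)
    (lam : Fin (n + 1) → (EuclideanSpace ℝ (Fin n) →ᵃ[ℝ] ℝ))
    (hlam : IsLagrangeBasis v lam)
    (hcoef : ∀ j x, lam j x = (∑ i : Fin n, l i j * x i) + b j) :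
    (∀ (x0 : EuclideanSpace ℝ (Fin n)) (ρ : ℝ), 0 < ρ →
      ¬ Metric.closedBall x0 ρ ⊆ simplexSet v →
      xiInd (Metric.closedBall x0 ρ) v =
        ((n : ℝ) + 1) * (⨆ j : Fin (n + 1),
          (ρ * Real.sqrt (∑ i : Fin n, (l i j) ^ 2) - (∑ i : Fin n, l i j * x0 i) - b j))
          + 1) ∧
    (¬ unitBall n ⊆ simplexSet v →
      xiInd (unitBall n) v =
        ((n : ℝ) + 1) * (⨆ j : Fin (n + 1),
          (Real.sqrt (∑ i : Fin n, (l i j) ^ 2) - b j)) + 1) :=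
  xi_ball_formula_general n v hv l b lam hlam hcoef
end

section
/- Let B = B(x⁰;R) be a closed Euclidean ball in ℝ^n, let S* be a regular simplex inscribed into B (all vertices on the boundary sphere), and let P* : C(B) → C(B) be the corresponding interpolation projector. Define ψ(t) := (2√n/(n+1))·(t(n+1−t))^{1/2} + |1 − 2t/(n+1)| for 0 ≤ t ≤ n+1, and a := ⌊(n+1)/2 − √(n+1)/2⌋. Then ‖P*‖_B = max{ψ(a), ψ(a+1)}, and √n ≤ ‖P*‖_B ≤ √(n+1); moreover, ‖P*‖_B = √n holds only for n = 1, and ‖P*‖_B = √(n+1) holds if and only if √(n+1) is an integer. -/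
open Set MeasureTheory Finset Metric

/-!
Put `w j = v j - x⁰`. Regularity and inscribedness give `⟪w j, w k⟫ = R²` for `j = k` and a
common value `c` otherwise; `n + 1` such vectors in `ℝⁿ` are dependent, which forces
`c = -R²/n`, and then `λ_j(x) = (1 + n ⟪x - x⁰, w j⟫ / R²) / (n + 1)`.

If `A` is the set of `j` with `λ_j(x) ≥ 0` and `k = #A`, then
`∑ |λ_j(x)| = 2 ∑_{j ∈ A} λ_j(x) - 1`, and Cauchy–Schwarz with
`‖∑_{j ∈ A} w j‖² = R² k (n + 1 - k) / n` bounds this by `ψ(k)`. Conversely, for `2k ≤ n + 1`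
and any `A` of size `k`, the point of the sphere opposite to `∑_{j ∈ A} w j` attains `ψ(k)`.

On `[0, (n + 1)/2]` one has `ψ(t) = √(n+1) - g(t)² / (n + 1)` with `g` increasing and vanishing
only at `t* = ((n + 1) - √(n+1)) / 2`. Hence `ψ` increases to `√(n+1)` on `[0, t*]` and
decreases to `ψ((n + 1)/2) = √n` after it, so the maximum of `ψ` over the integers sits at
`a = ⌊t*⌋` or `a + 1`, equals `√(n+1)` exactly when `t*` is an integer, and is at least
`ψ(a + 1) ≥ √n`.
-/

open scoped RealInnerProductSpace

noncomputable section

namespace RegularSimplex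

def psi (n : ℕ) (t : ℝ) : ℝ :=
  2 * √n / ((n : ℝ) + 1) * √(t * ((n : ℝ) + 1 - t)) + |1 - 2 * t / ((n : ℝ) + 1)|

def psiArgmax (n : ℕ) : ℝ :=
  ((n : ℝ) + 1) / 2 - √((n : ℝ) + 1) / 2

def psiDefect (n : ℕ) (t : ℝ) : ℝ :=
  √(√((n : ℝ) + 1) + 1) * √t - √(√((n : ℝ) + 1) - 1) * √((n : ℝ) + 1 - t)

section psi

variable {n : ℕ}

lemma one_le_sqrt_succ : 1 ≤ √((n : ℝ) + 1) :=
  Real.one_le_sqrt.mpr (by linarith [n.cast_nonneg (α := ℝ)])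

lemma psi_natCast_add_one_sub (t : ℝ) : psi n ((n : ℝ) + 1 - t) = psi n t := by
  have hn : (n : ℝ) + 1 ≠ 0 := by positivity
  rw [psi, psi, ← abs_neg (1 - 2 * t / _),
    show ((n : ℝ) + 1 - t) * ((n : ℝ) + 1 - ((n : ℝ) + 1 - t)) = t * ((n : ℝ) + 1 - t) by ring]
  congr 3
  field_simp
  ring

/-- Completing the square: `√(n+1) - ψ` is a square because `(√(n+1) + 1)(√(n+1) - 1) = n`. -/
lemma psi_eq_sqrt_sub_psiDefect_sq {t : ℝ} (ht : 0 ≤ t) (htn : 2 * t ≤ (n : ℝ) + 1) :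
    psi n t = √((n : ℝ) + 1) - psiDefect n t ^ 2 / ((n : ℝ) + 1) := by
  have hq : 1 ≤ √((n : ℝ) + 1) := one_le_sqrt_succ
  have hq2 : √((n : ℝ) + 1) ^ 2 = (n : ℝ) + 1 := Real.sq_sqrt (by positivity)
  set q := √((n : ℝ) + 1)
  have hcross : √(q + 1) * √t * (√(q - 1) * √((n : ℝ) + 1 - t)) =
      √n * √(t * ((n : ℝ) + 1 - t)) := by
    rw [mul_mul_mul_comm, ← Real.sqrt_mul (by linarith), ← Real.sqrt_mul ht]
    congr 2
    nlinarith
  have habs : |1 - 2 * t / ((n : ℝ) + 1)| = 1 - 2 * t / ((n : ℝ) + 1) :=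
    abs_of_nonneg (by rw [sub_nonneg, div_le_one (by positivity)]; exact htn)
  have hsq : psiDefect n t ^ 2 =
      (q - 1) * ((n : ℝ) + 1) + 2 * t - 2 * (√n * √(t * ((n : ℝ) + 1 - t))) := by
    rw [psiDefect]
    linear_combination √t ^ 2 * Real.sq_sqrt (by linarith : 0 ≤ q + 1) +
      (q + 1) * Real.sq_sqrt ht + √((n : ℝ) + 1 - t) ^ 2 * Real.sq_sqrt (by linarith : 0 ≤ q - 1) +
      (q - 1) * Real.sq_sqrt (by linarith : (0 : ℝ) ≤ (n : ℝ) + 1 - t) - 2 * hcross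
  rw [psi, habs, hsq]
  field_simp
  ring

lemma psiDefect_strictMonoOn : StrictMonoOn (psiDefect n) (Set.Ici 0) := by
  intro s hs t _ hst
  have h1 : √s < √t := Real.sqrt_lt_sqrt hs hst
  have h2 : √((n : ℝ) + 1 - t) ≤ √((n : ℝ) + 1 - s) := Real.sqrt_le_sqrt (by linarith)
  have h3 : 0 < √(√((n : ℝ) + 1) + 1) :=
    Real.sqrt_pos.mpr (by linarith [one_le_sqrt_succ (n := n)])
  have h4 : 0 ≤ √(√((n : ℝ) + 1) - 1) := Real.sqrt_nonneg _
  simp only [psiDefect]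
  nlinarith [mul_lt_mul_of_pos_left h1 h3, mul_le_mul_of_nonneg_left h2 h4]

lemma psiArgmax_nonneg : 0 ≤ psiArgmax n := by
  have hq : 1 ≤ √((n : ℝ) + 1) := one_le_sqrt_succ
  have hq2 : √((n : ℝ) + 1) ^ 2 = (n : ℝ) + 1 := Real.sq_sqrt (by positivity)
  rw [psiArgmax]
  nlinarith

lemma psiArgmax_le : 2 * psiArgmax n ≤ (n : ℝ) + 1 := by
  rw [psiArgmax]
  linarith [Real.sqrt_nonneg ((n : ℝ) + 1)]

lemma psiDefect_psiArgmax : psiDefect n (psiArgmax n) = 0 := by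
  have hq : 1 ≤ √((n : ℝ) + 1) := one_le_sqrt_succ
  have hq2 : √((n : ℝ) + 1) ^ 2 = (n : ℝ) + 1 := Real.sq_sqrt (by positivity)
  have ht := psiArgmax_nonneg (n := n)
  have ht' := psiArgmax_le (n := n)
  rw [psiDefect, sub_eq_zero, ← Real.sqrt_mul (by linarith), ← Real.sqrt_mul (by linarith)]
  congr 1
  rw [psiArgmax]
  linear_combination -hq2

lemma psiDefect_eq_zero_iff {t : ℝ} (ht : 0 ≤ t) : psiDefect n t = 0 ↔ t = psiArgmax n := by
  rw [← psiDefect_psiArgmax (n := n)]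
  exact psiDefect_strictMonoOn.injOn.eq_iff ht psiArgmax_nonneg

lemma psi_strictMonoOn : StrictMonoOn (psi n) (Set.Icc 0 (psiArgmax n)) := by
  rintro s ⟨hs, -⟩ t ⟨ht, htm⟩ hst
  have hlt : psiDefect n s < psiDefect n t := psiDefect_strictMonoOn hs ht hst
  have hle : psiDefect n t ≤ 0 :=
    psiDefect_psiArgmax (n := n) ▸ psiDefect_strictMonoOn.monotoneOn ht psiArgmax_nonneg htm
  have hmax := psiArgmax_le (n := n)
  rw [psi_eq_sqrt_sub_psiDefect_sq hs (by linarith), psi_eq_sqrt_sub_psiDefect_sq ht (by linarith)]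
  have hsq : psiDefect n t ^ 2 < psiDefect n s ^ 2 := by nlinarith
  linarith [div_lt_div_of_pos_right hsq (by positivity : (0 : ℝ) < (n : ℝ) + 1)]

lemma psi_strictAntiOn :
    StrictAntiOn (psi n) (Set.Icc (psiArgmax n) (((n : ℝ) + 1) / 2)) := by
  rintro s ⟨hsm, -⟩ t ⟨-, htn⟩ hst
  have hs : 0 ≤ s := psiArgmax_nonneg.trans hsm
  have hlt : psiDefect n s < psiDefect n t := psiDefect_strictMonoOn hs (hs.trans hst.le) hst
  have hle : 0 ≤ psiDefect n s :=
    psiDefect_psiArgmax (n := n) ▸ psiDefect_strictMonoOn.monotoneOn psiArgmax_nonneg hs hsm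
  rw [psi_eq_sqrt_sub_psiDefect_sq hs (by linarith),
    psi_eq_sqrt_sub_psiDefect_sq (hs.trans hst.le) (by linarith)]
  have hsq : psiDefect n s ^ 2 < psiDefect n t ^ 2 := by nlinarith
  linarith [div_lt_div_of_pos_right hsq (by positivity : (0 : ℝ) < (n : ℝ) + 1)]

lemma psi_le_sqrt {t : ℝ} (ht : 0 ≤ t) (htn : 2 * t ≤ (n : ℝ) + 1) :
    psi n t ≤ √((n : ℝ) + 1) := by
  rw [psi_eq_sqrt_sub_psiDefect_sq ht htn, sub_le_self_iff]
  positivity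

lemma psi_eq_sqrt_iff {t : ℝ} (ht : 0 ≤ t) (htn : 2 * t ≤ (n : ℝ) + 1) :
    psi n t = √((n : ℝ) + 1) ↔ t = psiArgmax n := by
  have hn : (n : ℝ) + 1 ≠ 0 := by positivity
  rw [psi_eq_sqrt_sub_psiDefect_sq ht htn, sub_eq_self, div_eq_zero_iff,
    pow_eq_zero_iff two_ne_zero, psiDefect_eq_zero_iff ht, or_iff_left hn]

lemma psi_half : psi n (((n : ℝ) + 1) / 2) = √n := by
  have hn : (n : ℝ) + 1 ≠ 0 := by positivity
  rw [psi, show ((n : ℝ) + 1) / 2 * ((n : ℝ) + 1 - ((n : ℝ) + 1) / 2) = (((n : ℝ) + 1) / 2) ^ 2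
      by ring, Real.sqrt_sq (by positivity),
    show 1 - 2 * (((n : ℝ) + 1) / 2) / ((n : ℝ) + 1) = 0 by field_simp; ring, abs_zero, add_zero]
  field_simp

section floor

variable {a : ℤ}

lemma floor_psiArgmax_nonneg (ha : a = ⌊psiArgmax n⌋) : 0 ≤ a :=
  ha ▸ Int.floor_nonneg.mpr psiArgmax_nonneg

lemma two_mul_floor_psiArgmax_add_two_le (hn : 0 < n) (ha : a = ⌊psiArgmax n⌋) :
    2 * (a : ℝ) + 2 ≤ (n : ℝ) + 1 := by
  have hq : 1 < √((n : ℝ) + 1) := Real.lt_sqrt_of_sq_lt (by norm_num; exact_mod_cast hn)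
  have haq : (a : ℝ) ≤ psiArgmax n := ha ▸ Int.floor_le _
  have h2a : 2 * a < (n : ℤ) := by
    rw [psiArgmax] at haq
    exact_mod_cast (by linarith : 2 * (a : ℝ) < n)
  exact_mod_cast (by omega : 2 * a + 2 ≤ (n : ℤ) + 1)

lemma psi_intCast_le_max (hn : 0 < n) (ha : a = ⌊psiArgmax n⌋) {z : ℤ} (hz : 0 ≤ z)
    (hzn : 2 * (z : ℝ) ≤ (n : ℝ) + 1) : psi n z ≤ max (psi n a) (psi n (a + 1)) := by
  have ha0 : (0 : ℝ) ≤ a := by exact_mod_cast floor_psiArgmax_nonneg ha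
  have haq : (a : ℝ) ≤ psiArgmax n := ha ▸ Int.floor_le _
  have hqa : psiArgmax n < a + 1 := ha ▸ Int.lt_floor_add_one _
  have h2a := two_mul_floor_psiArgmax_add_two_le hn ha
  rcases le_or_gt z a with hza | haz
  · have hza' : (z : ℝ) ≤ a := by exact_mod_cast hza
    exact le_max_of_le_left <| psi_strictMonoOn.monotoneOn
      ⟨by exact_mod_cast hz, hza'.trans haq⟩ ⟨ha0, haq⟩ hza'
  · have haz' : (a : ℝ) + 1 ≤ z := by exact_mod_cast haz
    exact le_max_of_le_right <| psi_strictAntiOn.antitoneOn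
      ⟨hqa.le, by linarith⟩ ⟨hqa.le.trans haz', by linarith⟩ haz'

lemma psi_natCast_le_max (hn : 0 < n) (ha : a = ⌊psiArgmax n⌋) {k : ℕ} (hk : k ≤ n + 1) :
    psi n k ≤ max (psi n a) (psi n (a + 1)) := by
  rcases le_or_gt (2 * (k : ℝ)) ((n : ℝ) + 1) with hkn | hkn
  · exact_mod_cast psi_intCast_le_max hn ha (Int.natCast_nonneg k) (by exact_mod_cast hkn)
  · have hk' : (k : ℝ) ≤ (n : ℝ) + 1 := by exact_mod_cast hk
    rw [← psi_natCast_add_one_sub]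
    exact_mod_cast psi_intCast_le_max hn ha (z := n + 1 - k) (by omega) (by push_cast; linarith)

lemma sqrt_le_psi_floor_add_one (hn : 0 < n) (ha : a = ⌊psiArgmax n⌋) :
    √n ≤ psi n (a + 1) := by
  have hqa : psiArgmax n < a + 1 := ha ▸ Int.lt_floor_add_one _
  have h2a := two_mul_floor_psiArgmax_add_two_le hn ha
  rw [← psi_half]
  exact psi_strictAntiOn.antitoneOn ⟨hqa.le, by linarith⟩
    ⟨by linarith [psiArgmax_le (n := n)], le_rfl⟩ (by linarith)

lemma max_psi_le_sqrt (hn : 0 < n) (ha : a = ⌊psiArgmax n⌋) :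
    max (psi n a) (psi n (a + 1)) ≤ √((n : ℝ) + 1) := by
  have ha0 : (0 : ℝ) ≤ a := by exact_mod_cast floor_psiArgmax_nonneg ha
  have h2a := two_mul_floor_psiArgmax_add_two_le hn ha
  exact max_le (psi_le_sqrt ha0 (by linarith)) (psi_le_sqrt (by linarith) (by linarith))

lemma max_psi_eq_sqrt_iff (hn : 0 < n) (ha : a = ⌊psiArgmax n⌋) :
    max (psi n a) (psi n (a + 1)) = √((n : ℝ) + 1) ↔ (a : ℝ) = psiArgmax n := by
  have ha0 : (0 : ℝ) ≤ a := by exact_mod_cast floor_psiArgmax_nonneg ha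
  have hqa : psiArgmax n < a + 1 := ha ▸ Int.lt_floor_add_one _
  have h2a := two_mul_floor_psiArgmax_add_two_le hn ha
  have hpsi_a := psi_eq_sqrt_iff ha0 (by linarith)
  have hpsi_a1 := psi_eq_sqrt_iff (n := n) (t := a + 1) (by linarith) (by linarith)
  constructor
  · intro h
    rcases max_choice (psi n a) (psi n (a + 1)) with hmax | hmax <;> rw [hmax] at h
    · exact hpsi_a.mp h
    · exact absurd (hpsi_a1.mp h) hqa.ne'
  · intro h
    exact le_antisymm (max_psi_le_sqrt hn ha) (le_max_of_le_left (hpsi_a.mpr h).ge)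

lemma eq_one_of_max_psi_eq_sqrt (hn : 0 < n) (ha : a = ⌊psiArgmax n⌋)
    (h : max (psi n a) (psi n (a + 1)) = √n) : n = 1 := by
  by_contra hn1
  have hlt : √n < √((n : ℝ) + 1) := Real.sqrt_lt_sqrt n.cast_nonneg (by linarith)
  have hqa : psiArgmax n < a + 1 := ha ▸ Int.lt_floor_add_one _
  have h2a := two_mul_floor_psiArgmax_add_two_le hn ha
  rcases h2a.lt_or_eq with h2a | h2a
  · have := psi_strictAntiOn (n := n) ⟨hqa.le, by linarith⟩
      ⟨by linarith [psiArgmax_le (n := n)], le_rfl⟩ (by linarith)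
    rw [psi_half] at this
    linarith [le_max_right (psi n a) (psi n (a + 1))]
  · -- `2a + 2 = n + 1` and `a ≤ psiArgmax n` force `√(n+1) ≤ 2`, hence `n = 3` and `a = 1`.
    have haq : (a : ℝ) ≤ psiArgmax n := ha ▸ Int.floor_le _
    rw [psiArgmax] at haq
    have hq2 : √((n : ℝ) + 1) ^ 2 = (n : ℝ) + 1 := Real.sq_sqrt (by positivity)
    have hn3 : (n : ℝ) ≤ 3 := by nlinarith [Real.sqrt_nonneg ((n : ℝ) + 1)]
    have h2a' : 2 * a + 2 = (n : ℤ) + 1 := by exact_mod_cast h2a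
    obtain ⟨rfl, rfl⟩ : n = 3 ∧ a = 1 := by
      have : n ≤ 3 := by exact_mod_cast hn3
      omega
    have hargmax : ((1 : ℤ) : ℝ) = psiArgmax 3 := by
      rw [psiArgmax, show ((3 : ℕ) : ℝ) + 1 = 2 ^ 2 by norm_num, Real.sqrt_sq (by norm_num)]
      norm_num
    rw [(max_psi_eq_sqrt_iff hn ha).mpr hargmax] at h
    exact hlt.ne' h

lemma intCast_eq_psiArgmax_iff (ha : a = ⌊psiArgmax n⌋) :
    (a : ℝ) = psiArgmax n ↔ ∃ m : ℕ, (m : ℝ) = √((n : ℝ) + 1) := by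
  constructor
  · intro h
    have hq : √((n : ℝ) + 1) = ((n + 1 - 2 * a : ℤ) : ℝ) := by
      rw [psiArgmax] at h
      push_cast
      linarith
    have hnonneg : 0 ≤ (n + 1 - 2 * a : ℤ) := by exact_mod_cast hq ▸ Real.sqrt_nonneg _
    exact ⟨(n + 1 - 2 * a).toNat, by rw [hq]; exact_mod_cast Int.toNat_of_nonneg hnonneg⟩
  · rintro ⟨m, hm⟩
    obtain ⟨r, hr⟩ := Int.even_mul_pred_self m
    have hm2 : (m : ℝ) ^ 2 = (n : ℝ) + 1 := by rw [hm]; exact Real.sq_sqrt (by positivity)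
    have hr' : (m : ℝ) * (m - 1) = r + r := by exact_mod_cast hr
    have hargmax : psiArgmax n = r := by
      rw [psiArgmax, ← hm, ← hm2]
      linarith
    rw [ha, hargmax, Int.floor_intCast]

end floor

end psi

lemma sum_sub_sum_compl_le_sum_abs {ι : Type*} [Fintype ι] [DecidableEq ι] (y : ι → ℝ)
    (A : Finset ι) : ∑ i ∈ A, y i - ∑ i ∈ Aᶜ, y i ≤ ∑ i, |y i| := by
  rw [← sum_add_sum_compl A, sub_eq_add_neg, ← sum_neg_distrib]
  exact add_le_add (sum_le_sum fun i _ => le_abs_self _) (sum_le_sum fun i _ => neg_le_abs _)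

lemma sum_abs_eq_sum_sub_sum_compl {ι : Type*} [Fintype ι] [DecidableEq ι] (y : ι → ℝ) :
    ∑ i, |y i| =
      ∑ i ∈ univ.filter (0 ≤ y ·), y i - ∑ i ∈ (univ.filter (0 ≤ y ·))ᶜ, y i := by
  rw [← sum_add_sum_compl (univ.filter (0 ≤ y ·)), sub_eq_add_neg, ← sum_neg_distrib]
  congr 1 <;> refine sum_congr rfl fun i hi => ?_
  · exact abs_of_nonneg (mem_filter.mp hi).2
  · exact abs_of_neg (by simpa using hi)

section geometry

variable {E : Type*} [NormedAddCommGroup E] [InnerProductSpace ℝ E]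

section gram

variable {ι : Type*} [DecidableEq ι] {w : ι → E} {c d : ℝ}

lemma norm_sum_sq_of_inner_eq_ite (hw : ∀ i j, ⟪w i, w j⟫ = if i = j then d else c)
    (A : Finset ι) : ‖∑ i ∈ A, w i‖ ^ 2 = #A * d + #A * (#A - 1) * c := by
  have hrow : ∀ i ∈ A, ∑ j ∈ A, ⟪w i, w j⟫ = d + (#A - 1) * c := by
    intro i hi
    rw [← add_sum_erase A _ hi, hw, if_pos rfl,
      sum_congr rfl fun j hj => by rw [hw, if_neg (ne_of_mem_erase hj).symm], sum_const,
      card_erase_of_mem hi, nsmul_eq_mul, Nat.cast_sub (card_pos.mpr ⟨i, hi⟩), Nat.cast_one]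
  rw [← real_inner_self_eq_norm_sq, sum_inner, sum_congr rfl fun i _ => inner_sum _ _ _,
    sum_congr rfl hrow, sum_const, nsmul_eq_mul]
  ring

/-- `d + (#ι - 1) c` is the eigenvalue of the Gram matrix `(d - c) I + c J` on the all-ones vector,
and the only one that can vanish. -/
lemma add_mul_eq_zero_of_not_linearIndependent [Fintype ι]
    (hw : ∀ i j, ⟪w i, w j⟫ = if i = j then d else c) (hcd : c ≠ d)
    (hdep : ¬ LinearIndependent ℝ w) : d + (Fintype.card ι - 1) * c = 0 := by
  obtain ⟨z, hz, i₀, hi₀⟩ := Fintype.not_linearIndependent_iff.mp hdep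
  have hrow : ∀ i, z i * (d - c) + (∑ j, z j) * c = 0 := by
    intro i
    have h := congrArg (⟪w i, ·⟫) hz
    simp only [inner_sum, real_inner_smul_right, hw, inner_zero_right] at h
    have hsplit : ∀ j, z j * (if i = j then d else c) =
        z j * c + if i = j then z j * (d - c) else 0 := by
      intro j
      split_ifs <;> ring
    rw [sum_congr rfl fun j _ => hsplit j, sum_add_distrib, sum_ite_eq,
      if_pos (Finset.mem_univ _), ← sum_mul] at h
    linarith
  have hconst : ∀ i, z i = z i₀ := fun i =>
    mul_right_cancel₀ (sub_ne_zero.mpr hcd.symm) (by linarith [hrow i, hrow i₀])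
  have h := hrow i₀
  rw [sum_congr rfl fun i _ => hconst i, sum_const, card_univ, nsmul_eq_mul] at h
  have : z i₀ * (d + (Fintype.card ι - 1) * c) = 0 := by linarith
  exact (mul_eq_zero.mp this).resolve_left hi₀

end gram


variable {n : ℕ}

lemma inner_sub_eq_of_regular [FiniteDimensional ℝ E] (hE : Module.finrank ℝ E = n)
    {v : Fin (n + 1) → E} (hv : AffineIndependent ℝ v) {e : ℝ}
    (hreg : ∀ j k, j ≠ k → dist (v j) (v k) = e) {x0 : E} {R : ℝ}
    (hins : ∀ j, dist (v j) x0 = R) (j k : Fin (n + 1)) :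
    ⟪v j - x0, v k - x0⟫ = if j = k then R ^ 2 else -R ^ 2 / n := by
  have hnorm : ∀ j, ‖v j - x0‖ = R := fun j => by rw [← dist_eq_norm, hins]
  have hw : ∀ j k, ⟪v j - x0, v k - x0⟫ = if j = k then R ^ 2 else R ^ 2 - e ^ 2 / 2 := by
    intro j k
    split_ifs with hjk
    · rw [hjk, real_inner_self_eq_norm_sq, hnorm]
    · have h := norm_sub_sq_real (v j - x0) (v k - x0)
      rw [sub_sub_sub_cancel_right, ← dist_eq_norm, hreg j k hjk, hnorm, hnorm] at h
      linarith
  rw [hw]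
  split_ifs with hjk
  · rfl
  have hn : (n : ℝ) ≠ 0 := Nat.cast_ne_zero.mpr <| by
    rintro rfl
    exact hjk (Subsingleton.elim (α := Fin 1) j k)
  have he : e ≠ 0 := by
    rw [← hreg j k hjk]
    exact dist_ne_zero.mpr (hv.injective.ne hjk)
  have hdep : ¬ LinearIndependent ℝ (fun j => v j - x0) := fun hli => by
    simpa [hE] using hli.fintype_card_le_finrank
  have h := add_mul_eq_zero_of_not_linearIndependent hw
    (by simpa [sub_eq_self] using he) hdep
  rw [Fintype.card_fin, Nat.cast_add_one, add_sub_cancel_right] at h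
  field_simp
  linarith

lemma exists_affineMap_apply_eq (x0 p : E) (c : ℝ) :
    ∃ L : E →ᵃ[ℝ] ℝ, ∀ x, L x = c + ⟪p, x - x0⟫ :=
  ⟨(innerSL ℝ p).toLinearMap.toAffineMap + AffineMap.const ℝ E (c - ⟪p, x0⟫), fun x => by
    simp [inner_sub_right]; ring⟩

lemma lagrange_apply_eq (hn : 0 < n) {v : Fin (n + 1) → E}
    (hspan : affineSpan ℝ (range v) = ⊤) {x0 : E} {R : ℝ} (hR : R ≠ 0)
    (hgram : ∀ j k, ⟪v j - x0, v k - x0⟫ = if j = k then R ^ 2 else -R ^ 2 / n)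
    {lam : Fin (n + 1) → E →ᵃ[ℝ] ℝ} (hlam : ∀ j k, lam j (v k) = if j = k then 1 else 0)
    (j : Fin (n + 1)) (x : E) :
    lam j x = (1 + n / R ^ 2 * ⟪x - x0, v j - x0⟫) / (n + 1) := by
  obtain ⟨L, hL⟩ :=
    exists_affineMap_apply_eq x0 ((n / (((n : ℝ) + 1) * R ^ 2)) • (v j - x0)) (1 / ((n : ℝ) + 1))
  have hL' : ∀ x, L x = (1 + n / R ^ 2 * ⟪x - x0, v j - x0⟫) / (n + 1) := fun x => by
    rw [hL, real_inner_smul_left, real_inner_comm]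
    field_simp
  suffices lam j = L by rw [this, hL']
  refine AffineMap.ext_on hspan ?_
  rintro _ ⟨k, rfl⟩
  have hn' : (n : ℝ) ≠ 0 := by positivity
  rw [hlam, hL', real_inner_comm, hgram]
  split_ifs <;> field_simp <;> ring

section projectorNorm

variable {R : ℝ} {w : Fin (n + 1) → E}

lemma norm_sum_sq_eq (hn : 0 < n)
    (hw : ∀ j k, ⟪w j, w k⟫ = if j = k then R ^ 2 else -R ^ 2 / n) (A : Finset (Fin (n + 1))) :
    ‖∑ j ∈ A, w j‖ ^ 2 = R ^ 2 * #A * ((n : ℝ) + 1 - #A) / n := by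
  rw [norm_sum_sq_of_inner_eq_ite hw]
  field_simp
  ring

lemma sum_eq_zero_of_inner_eq_ite (hn : 0 < n)
    (hw : ∀ j k, ⟪w j, w k⟫ = if j = k then R ^ 2 else -R ^ 2 / n) : ∑ j, w j = 0 := by
  rw [← norm_eq_zero, ← sq_eq_zero_iff, norm_sum_sq_eq hn hw, card_univ, Fintype.card_fin]
  push_cast
  ring

lemma div_mul_norm_sum_eq (hn : 0 < n) (hR : 0 < R)
    (hw : ∀ j k, ⟪w j, w k⟫ = if j = k then R ^ 2 else -R ^ 2 / n) (A : Finset (Fin (n + 1))) :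
    n / R * ‖∑ j ∈ A, w j‖ = √n * √(#A * ((n : ℝ) + 1 - #A)) := by
  rw [← Real.sqrt_mul n.cast_nonneg,
    ← Real.sqrt_sq (by positivity : 0 ≤ n / R * ‖∑ j ∈ A, w j‖), mul_pow, norm_sum_sq_eq hn hw]
  congr 1
  field_simp

lemma exists_mem_closedBall_inner_eq_neg (hR : 0 ≤ R) (s : E) :
    ∃ y ∈ closedBall (0 : E) R, ⟪y, s⟫ = -(R * ‖s‖) := by
  rcases eq_or_ne s 0 with rfl | hs
  · exact ⟨0, mem_closedBall_self hR, by simp⟩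
  have hs' : ‖s‖ ≠ 0 := norm_ne_zero_iff.mpr hs
  refine ⟨-(R / ‖s‖) • s, ?_, ?_⟩
  · rw [mem_closedBall_zero_iff, norm_smul, norm_neg, Real.norm_of_nonneg (by positivity),
      div_mul_cancel₀ _ hs']
  · rw [real_inner_smul_left, real_inner_self_eq_norm_sq]
    field_simp

variable {x0 : E} {f : Fin (n + 1) → E → ℝ}

lemma sum_apply_eq_of_eq_inner (hf : ∀ j x, f j x = (1 + n / R ^ 2 * ⟪x - x0, w j⟫) / (n + 1))
    (A : Finset (Fin (n + 1))) (x : E) :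
    ∑ j ∈ A, f j x = (#A + n / R ^ 2 * ⟪x - x0, ∑ j ∈ A, w j⟫) / (n + 1) := by
  simp only [hf, ← sum_div, sum_add_distrib, ← mul_sum, inner_sum, sum_const, nsmul_one]

lemma sum_apply_eq_one (hn : 0 < n)
    (hw : ∀ j k, ⟪w j, w k⟫ = if j = k then R ^ 2 else -R ^ 2 / n)
    (hf : ∀ j x, f j x = (1 + n / R ^ 2 * ⟪x - x0, w j⟫) / (n + 1)) (x : E) :
    ∑ j, f j x = 1 := by
  rw [sum_apply_eq_of_eq_inner hf, sum_eq_zero_of_inner_eq_ite hn hw, inner_zero_right,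
    card_univ, Fintype.card_fin]
  field_simp
  push_cast
  ring

lemma exists_sum_abs_le_psi (hn : 0 < n) (hR : 0 < R)
    (hw : ∀ j k, ⟪w j, w k⟫ = if j = k then R ^ 2 else -R ^ 2 / n)
    (hf : ∀ j x, f j x = (1 + n / R ^ 2 * ⟪x - x0, w j⟫) / (n + 1)) {x : E}
    (hx : x ∈ closedBall x0 R) : ∃ k ≤ n + 1, ∑ j, |f j x| ≤ psi n k := by
  classical
  set A := univ.filter (0 ≤ f · x)
  refine ⟨#A, (card_le_univ A).trans_eq (Fintype.card_fin _), ?_⟩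
  have hinner : n / R ^ 2 * ⟪x - x0, ∑ j ∈ A, w j⟫ ≤ √n * √(#A * ((n : ℝ) + 1 - #A)) := by
    rw [← div_mul_norm_sum_eq hn hR hw]
    calc n / R ^ 2 * ⟪x - x0, ∑ j ∈ A, w j⟫ ≤ n / R ^ 2 * (R * ‖∑ j ∈ A, w j‖) := by
          gcongr
          exact (real_inner_le_norm _ _).trans
            (mul_le_mul_of_nonneg_right (mem_closedBall_iff_norm.mp hx) (norm_nonneg _))
      _ = n / R * ‖∑ j ∈ A, w j‖ := by field_simp
  have hcompl := sum_add_sum_compl A (f · x)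
  rw [sum_apply_eq_one hn hw hf] at hcompl
  rw [sum_abs_eq_sum_sub_sum_compl, psi]
  calc ∑ j ∈ A, f j x - ∑ j ∈ Aᶜ, f j x = 2 * ∑ j ∈ A, f j x - 1 := by linarith
    _ ≤ 2 * ((#A + √n * √(#A * ((n : ℝ) + 1 - #A))) / (n + 1)) - 1 := by
        rw [sum_apply_eq_of_eq_inner hf]
        gcongr
    _ = 2 * √n / (n + 1) * √(#A * ((n : ℝ) + 1 - #A)) - (1 - 2 * #A / (n + 1)) := by ring
    _ ≤ _ := by linarith [neg_le_abs (1 - 2 * (#A : ℝ) / (n + 1))]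

lemma exists_psi_le_sum_abs (hn : 0 < n) (hR : 0 < R)
    (hw : ∀ j k, ⟪w j, w k⟫ = if j = k then R ^ 2 else -R ^ 2 / n)
    (hf : ∀ j x, f j x = (1 + n / R ^ 2 * ⟪x - x0, w j⟫) / (n + 1)) {k : ℕ}
    (hk : 2 * k ≤ n + 1) : ∃ x ∈ closedBall x0 R, psi n k ≤ ∑ j, |f j x| := by
  classical
  obtain ⟨A, -, hA⟩ := exists_subset_card_eq (s := (univ : Finset (Fin (n + 1)))) (n := k)
    (by rw [card_univ, Fintype.card_fin]; omega)
  obtain ⟨y, hy, hys⟩ := exists_mem_closedBall_inner_eq_neg hR.le (∑ j ∈ A, w j)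
  refine ⟨x0 + y, by simpa using hy, ?_⟩
  have hcompl := sum_add_sum_compl A (f · (x0 + y))
  rw [sum_apply_eq_one hn hw hf] at hcompl
  have hsum := sum_apply_eq_of_eq_inner hf A (x0 + y)
  rw [add_sub_cancel_left, hys, hA, mul_neg, ← mul_assoc,
    show n / R ^ 2 * R = n / R by field_simp, div_mul_norm_sum_eq hn hR hw, hA] at hsum
  have hk' : 2 * (k : ℝ) ≤ n + 1 := by exact_mod_cast hk
  have habs : |1 - 2 * (k : ℝ) / (n + 1)| = 1 - 2 * k / (n + 1) :=
    abs_of_nonneg (by rw [sub_nonneg, div_le_one (by positivity)]; exact hk')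
  calc psi n k = 1 - 2 * ∑ j ∈ A, f j (x0 + y) := by rw [hsum, psi, habs]; ring
    _ = ∑ j ∈ Aᶜ, f j (x0 + y) - ∑ j ∈ Aᶜᶜ, f j (x0 + y) := by rw [compl_compl]; linarith
    _ ≤ _ := sum_sub_sum_compl_le_sum_abs _ _

theorem sSup_sum_abs_eq_max_psi (hn : 0 < n) (hR : 0 < R)
    (hw : ∀ j k, ⟪w j, w k⟫ = if j = k then R ^ 2 else -R ^ 2 / n)
    (hf : ∀ j x, f j x = (1 + n / R ^ 2 * ⟪x - x0, w j⟫) / (n + 1)) {a : ℤ}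
    (ha : a = ⌊psiArgmax n⌋) :
    sSup ((fun x => ∑ j, |f j x|) '' closedBall x0 R) = max (psi n a) (psi n (a + 1)) := by
  have hub : ∀ y ∈ (fun x => ∑ j, |f j x|) '' closedBall x0 R,
      y ≤ max (psi n a) (psi n (a + 1)) := by
    rintro _ ⟨x, hx, rfl⟩
    obtain ⟨k, hk, hle⟩ := exists_sum_abs_le_psi hn hR hw hf hx
    exact hle.trans (psi_natCast_le_max hn ha hk)
  have hlb : ∀ k : ℕ, 2 * k ≤ n + 1 →
      psi n k ≤ sSup ((fun x => ∑ j, |f j x|) '' closedBall x0 R) := fun k hk => by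
    obtain ⟨x, hx, hle⟩ := exists_psi_le_sum_abs hn hR hw hf hk
    exact hle.trans (le_csSup ⟨_, hub⟩ ⟨x, hx, rfl⟩)
  have h2a := two_mul_floor_psiArgmax_add_two_le hn ha
  lift a to ℕ using floor_psiArgmax_nonneg ha
  have h2a' : 2 * a + 2 ≤ n + 1 := by exact_mod_cast h2a
  refine le_antisymm (csSup_le ((nonempty_closedBall.mpr hR.le).image _) hub) (max_le ?_ ?_)
  · exact_mod_cast hlb a (by omega)
  · exact_mod_cast hlb (a + 1) (by omega)

end projectorNorm

end geometry

end RegularSimplex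

end

/-- Theorem 11.2: For a regular simplex inscribed into a ball
`B = B(x⁰;R)` and the corresponding projector `P*`, with
`ψ(t) = (2√n/(n+1))·√(t(n+1−t)) + |1 − 2t/(n+1)|` and
`a = ⌊(n+1)/2 − √(n+1)/2⌋`:  `‖P*‖_B = max{ψ(a), ψ(a+1)}`,
`√n ≤ ‖P*‖_B ≤ √(n+1)`; `‖P*‖_B = √n` only for `n = 1`, and
`‖P*‖_B = √(n+1)` iff `√(n+1)` is an integer. -/
theorem regular_simplex_proj_norm (n : ℕ) (hn : 0 < n)
    (x0 : EuclideanSpace ℝ (Fin n)) (R : ℝ) (hR : 0 < R)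
    (v : Fin (n + 1) → EuclideanSpace ℝ (Fin n)) (hv : AffineIndependent ℝ v)
    (e : ℝ) (hreg : ∀ j k, j ≠ k → dist (v j) (v k) = e)
    (hins : ∀ j, dist (v j) x0 = R)
    (lam : Fin (n + 1) → (EuclideanSpace ℝ (Fin n) →ᵃ[ℝ] ℝ))
    (hlam : IsLagrangeBasis v lam)
    (ψ : ℝ → ℝ)
    (hψ : ∀ t : ℝ, ψ t = (2 * Real.sqrt n / ((n : ℝ) + 1)) *
      Real.sqrt (t * ((n : ℝ) + 1 - t)) + |1 - 2 * t / ((n : ℝ) + 1)|)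
    (a : ℤ) (ha : a = ⌊((n : ℝ) + 1) / 2 - Real.sqrt ((n : ℝ) + 1) / 2⌋) :
    projNorm (Metric.closedBall x0 R) lam = max (ψ (a : ℝ)) (ψ ((a : ℝ) + 1)) ∧
    Real.sqrt n ≤ projNorm (Metric.closedBall x0 R) lam ∧
    projNorm (Metric.closedBall x0 R) lam ≤ Real.sqrt ((n : ℝ) + 1) ∧
    (projNorm (Metric.closedBall x0 R) lam = Real.sqrt n → n = 1) ∧
    (projNorm (Metric.closedBall x0 R) lam = Real.sqrt ((n : ℝ) + 1) ↔
      ∃ m : ℕ, (m : ℝ) = Real.sqrt ((n : ℝ) + 1)) := by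
  obtain rfl : ψ = RegularSimplex.psi n := funext hψ
  have hgram := RegularSimplex.inner_sub_eq_of_regular finrank_euclideanSpace_fin hv hreg hins
  have hspan : affineSpan ℝ (range v) = ⊤ :=
    hv.affineSpan_eq_top_iff_card_eq_finrank_add_one.mpr (by simp)
  have hnorm : projNorm (closedBall x0 R) lam = _ :=
    RegularSimplex.sSup_sum_abs_eq_max_psi hn hR hgram
      (RegularSimplex.lagrange_apply_eq hn hspan hR.ne' hgram hlam) ha
  rw [hnorm]
  exact ⟨rfl, le_max_of_le_right (RegularSimplex.sqrt_le_psi_floor_add_one hn ha),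
    RegularSimplex.max_psi_le_sqrt hn ha, RegularSimplex.eq_one_of_max_psi_eq_sqrt hn ha,
    (RegularSimplex.max_psi_eq_sqrt_iff hn ha).trans (RegularSimplex.intCast_eq_psiArgmax_iff ha)⟩
end
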